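/- Let G be a finite group and let M₁, M₂ be G-lattices each fitting into a coflasque resolution 0 → C_i → P_i → M_i → 0 with P_i a permutation lattice and C_i coflasque (i = 1, 2). If M₁ ⊕ Q₁ ≅ M₂ ⊕ Q₂ for some permutation lattices Q₁, Q₂, then C₁ ⊕ P₂ ⊕ Q₁ and C₂ ⊕ P₁ ⊕ Q₂ become isomorphic after adding suitable permutation lattices; in particular C₁ and C₂ are permutation equivalent (C₁ ⊕ R₁ ≅ C₂ ⊕ R₂ for permutation lattices R₁, R₂). -/

import Mathlib

/-!
Pull the two resolutions back over their common quotient: after replacing `Mᵢ` by `M₂ × Q₂`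
and `Pᵢ` by `Pᵢ × Qᵢ`, the fibre product `X = P₁ ×_M P₂` sits in exact sequences
`0 → C₁ → X → P₂ → 0` and `0 → C₂ → X → P₁ → 0`. Both split equivariantly: over a permutation
lattice, a section amounts to lifting each basis vector `e_i` to an element fixed by its
stabilizer `H`, and the obstruction to that is a class in `H¹(H, C)`, which vanishes because
`C` is coflasque. Hence `C₁ × P₂ ≃ X ≃ C₂ × P₁`.
-/


/-- The multiplicative group structure on `AddAut M` (composition), as in the older Mathlib. -/
instance addAutGroupByComp {M : Type*} [Add M] : Group (AddAut M) where
  mul g h := AddEquiv.trans h g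
  one := AddEquiv.refl _
  inv := AddEquiv.symm
  mul_assoc _ _ _ := rfl
  one_mul _ := rfl
  mul_one _ := rfl
  inv_mul_cancel := AddEquiv.self_trans_symm

theorem addAutGroupByComp_one_apply {M : Type*} [Add M] (m : M) : (1 : AddAut M) m = m := rfl

theorem addAutGroupByComp_mul_apply {M : Type*} [Add M] (e₁ e₂ : AddAut M) (m : M) :
    (e₁ * e₂) m = e₁ (e₂ m) := rfl

/-- A 1-cohomology-vanishing ("coflasque") condition for an action `ρ` of `G` on `M`:
every 1-cocycle of every subgroup is a coboundary. -/
def IsCoflasque {G M : Type*} [Group G] [AddCommGroup M] (ρ : G →* AddAut M) : Prop :=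
  ∀ (H : Subgroup G) (c : ↥H → M),
    (∀ g h : ↥H, c (g * h) = c g + ρ ↑g (c h)) → ∃ m : M, ∀ g : ↥H, c g = ρ ↑g m - m

/-- "Flasque" condition (vanishing of `Ĥ⁻¹` for all subgroups): every element killed by
the norm of a subgroup lies in the augmentation submodule. -/
def IsFlasque {G M : Type*} [Group G] [Finite G] [AddCommGroup M] (ρ : G →* AddAut M) : Prop :=
  ∀ (H : Subgroup G) (x : M), (∑ᶠ h : ↥H, ρ ↑h x = 0) →
    x ∈ AddSubgroup.closure {y | ∃ (h : ↥H) (m : M), y = ρ ↑h m - m}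

/-- The permutation action of `G` on `ι → ℤ` induced by an action on `ι`. -/
def permAut {G ι : Type*} [Group G] (act : G →* Equiv.Perm ι) : G →* AddAut (ι → ℤ) where
  toFun g :=
    { toEquiv := Equiv.arrowCongr (act g) (Equiv.refl ℤ)
      map_add' := fun _ _ => rfl }
  map_one' := by ext f i; simp [addAutGroupByComp_one_apply] <;> rfl
  map_mul' := by
    intro g h; ext f i
    simp [← Equiv.Perm.inv_def, mul_inv_rev, Equiv.Perm.mul_apply, addAutGroupByComp_mul_apply] <;> rfl

/-- `ρ` is a permutation representation: `M` is equivariantly isomorphic to a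
finitely generated permutation `G`-lattice. -/
def IsPermutationRep {G M : Type*} [Group G] [AddCommGroup M] (ρ : G →* AddAut M) : Prop :=
  ∃ (ι : Type) (_ : Fintype ι) (act : G →* Equiv.Perm ι) (e : M ≃+ (ι → ℤ)),
    ∀ (g : G) (m : M), e (ρ g m) = permAut act g (e m)

/-- `ρ` is invertible (permutation projective): `M` is an equivariant direct summand of a
finitely generated permutation `G`-lattice. -/
def IsInvertibleRep {G M : Type*} [Group G] [AddCommGroup M] (ρ : G →* AddAut M) : Prop :=
  ∃ (ι : Type) (_ : Fintype ι) (act : G →* Equiv.Perm ι)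
    (f : M →+ (ι → ℤ)) (g : (ι → ℤ) →+ M),
      (∀ (γ : G) (m : M), f (ρ γ m) = permAut act γ (f m)) ∧
      (∀ (γ : G) (x : ι → ℤ), g (permAut act γ x) = ρ γ (g x)) ∧
      (∀ m : M, g (f m) = m)

/-- The diagonal action on a product. -/
def prodAut {G M N : Type*} [Group G] [AddCommGroup M] [AddCommGroup N]
    (ρ : G →* AddAut M) (σ : G →* AddAut N) : G →* AddAut (M × N) where
  toFun g := AddEquiv.prodCongr (ρ g) (σ g)
  map_one' := by
    ext x <;> simp [AddEquiv.prodCongr, addAutGroupByComp_one_apply]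
  map_mul' := by
    intro g h
    ext x <;> simp [AddEquiv.prodCongr, addAutGroupByComp_mul_apply]

open Function

section

variable {G : Type*} [Group G]

theorem AddAut.map_mul_apply {M : Type*} [Add M] (ρ : G →* AddAut M) (g h : G) (x : M) :
    ρ (g * h) x = ρ g (ρ h x) := by
  rw [map_mul]; rfl

section Equivariance

variable {M N K M' N' : Type*} [AddCommGroup M] [AddCommGroup N] [AddCommGroup K]
  [AddCommGroup M'] [AddCommGroup N']
  {ρ : G →* AddAut M} {σ : G →* AddAut N} {τ : G →* AddAut K}
  {ρ' : G →* AddAut M'} {σ' : G →* AddAut N'}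

def IsEquivariant (ρ : G →* AddAut M) (σ : G →* AddAut N) (f : M → N) : Prop :=
  ∀ g x, f (ρ g x) = σ g (f x)

theorem IsEquivariant.id : IsEquivariant ρ ρ id := fun _ _ => rfl

theorem IsEquivariant.comp {f : M → N} {f' : N → K} (hf' : IsEquivariant σ τ f')
    (hf : IsEquivariant ρ σ f) : IsEquivariant ρ τ (f' ∘ f) := fun g x => by
  simp only [comp_apply, hf g x, hf' g (f x)]

theorem IsEquivariant.symm {e : M ≃+ N} (he : IsEquivariant ρ σ e) :
    IsEquivariant σ ρ e.symm := fun g y => e.injective <| by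
  rw [he, AddEquiv.apply_symm_apply, AddEquiv.apply_symm_apply]

theorem IsEquivariant.prodMap {f : M → N} {f' : M' → N'} (hf : IsEquivariant ρ σ f)
    (hf' : IsEquivariant ρ' σ' f') :
    IsEquivariant (prodAut ρ ρ') (prodAut σ σ') (Prod.map f f') := fun g x =>
  Prod.ext (hf g x.1) (hf' g x.2)

theorem isEquivariant_inl : IsEquivariant ρ (prodAut ρ σ) (AddMonoidHom.inl M N) := fun g _ =>
  Prod.ext rfl (map_zero (σ g)).symm

end Equivariance

theorem permAut_apply {ι : Type*} (act : G →* Equiv.Perm ι) (g : G) (f : ι → ℤ) (i : ι) :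
    permAut act g f i = f ((act g).symm i) := rfl

theorem permAut_single {ι : Type*} [DecidableEq ι] (act : G →* Equiv.Perm ι) (g : G) (i : ι) :
    permAut act g (Pi.single i 1) = Pi.single (act g i) 1 := by
  ext k
  simp only [permAut_apply, Pi.single_apply, Equiv.symm_apply_eq]

theorem exists_equivariant_family {ι X : Type*} [Add X] (act : G →* Equiv.Perm ι)
    (ρ : G →* AddAut X) (P : ι → X → Prop) (hP : ∀ g i x, P i x → P (act g i) (ρ g x))
    (hfix : ∀ i, ∃ x, P i x ∧ ∀ g, act g i = i → ρ g x = x) :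
    ∃ x : ι → X, (∀ i, P i (x i)) ∧ ∀ g i, ρ g (x i) = x (act g i) := by
  let _ : MulAction G ι := MulAction.compHom ι act
  choose x₀ hPx₀ hx₀ using hfix
  let r : ι → ι := fun i => (Quotient.mk (MulAction.orbitRel G ι) i).out
  have hr : ∀ g i, r (act g i) = r i := fun g i =>
    congrArg Quotient.out (Quotient.sound (MulAction.mem_orbit i g))
  have : ∀ i, ∃ γ : G, act γ (r i) = i := fun i =>
    MulAction.mem_orbit_iff.1 <|
      MulAction.mem_orbit_symm.1 (Quotient.mk_out (s := MulAction.orbitRel G ι) i)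
  choose γ hγ using this
  refine ⟨fun i => ρ (γ i) (x₀ (r i)), fun i => ?_, fun g i => ?_⟩
  · simpa only [hγ] using hP (γ i) (r i) _ (hPx₀ (r i))
  have hstab : act ((γ (act g i))⁻¹ * g * γ i) (r i) = r i := by
    rw [map_mul, map_mul, map_inv, Equiv.Perm.mul_apply, Equiv.Perm.mul_apply, hγ,
      Equiv.Perm.inv_eq_iff_eq, ← hr g i, hγ]
  calc ρ g (ρ (γ i) (x₀ (r i)))
      = ρ (γ (act g i)) (ρ ((γ (act g i))⁻¹ * g * γ i) (x₀ (r i))) := by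
        rw [← AddAut.map_mul_apply, ← AddAut.map_mul_apply, mul_assoc, mul_inv_cancel_left]
    _ = ρ (γ (act g i)) (x₀ (r (act g i))) := by rw [hx₀ _ _ hstab, hr]

structure IsShortExact {A B C : Type*} [AddCommGroup A] [AddCommGroup B] [AddCommGroup C]
    (f : A →+ B) (g : B →+ C) : Prop where
  injective : Injective f
  exact : Exact f g
  surjective : Surjective g

section ShortExact

variable {C X Y Y' : Type*} [AddCommGroup C] [AddCommGroup X] [AddCommGroup Y]
  [AddCommGroup Y'] {j : C →+ X} {π : X →+ Y}

theorem IsShortExact.addEquiv_comp (hs : IsShortExact j π) (e : Y ≃+ Y') :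
    IsShortExact j (e.toAddMonoidHom.comp π) :=
  ⟨hs.injective, hs.exact.comp_injective _ e.injective (map_zero e),
    e.surjective.comp hs.surjective⟩

theorem IsShortExact.prodMap_id (hs : IsShortExact j π) (Q : Type*) [AddCommGroup Q] :
    IsShortExact ((AddMonoidHom.inl X Q).comp j) (π.prodMap (AddMonoidHom.id Q)) where
  injective _ _ h := hs.injective (congrArg Prod.fst h)
  exact := fun ⟨x, q⟩ => by
    refine ⟨fun h => ?_, fun ⟨c, hc⟩ => ?_⟩
    · obtain ⟨hx, hq⟩ : π x = 0 ∧ q = 0 := Prod.mk_eq_zero.1 h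
      obtain ⟨c, rfl⟩ := (hs.exact x).1 hx
      exact ⟨c, Prod.ext rfl hq.symm⟩
    · obtain ⟨rfl, rfl⟩ := Prod.mk.inj hc
      exact Prod.ext (hs.exact.apply_apply_eq_zero c) rfl
  surjective := hs.surjective.prodMap surjective_id

end ShortExact

section Splitting

variable {C X Y : Type*} [AddCommGroup C] [AddCommGroup X] [AddCommGroup Y]
  {ρC : G →* AddAut C} {ρX : G →* AddAut X} {ρY : G →* AddAut Y} {j : C →+ X} {π : X →+ Y}

theorem IsCoflasque.exists_fixed_lift (hC : IsCoflasque ρC) (hs : IsShortExact j π)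
    (hj : IsEquivariant ρC ρX j) (hπ : IsEquivariant ρX ρY π) (H : Subgroup G) (y : Y)
    (hy : ∀ h ∈ H, ρY h y = y) : ∃ x, π x = y ∧ ∀ h ∈ H, ρX h x = x := by
  obtain ⟨x₀, rfl⟩ := hs.surjective y
  -- `h ↦ h x₀ - x₀` is a cocycle of `H` with values in `C`; a coboundary `h m - m` corrects `x₀`.
  have hker : ∀ h : H, ∃ c, j c = ρX h x₀ - x₀ := fun h =>
    (hs.exact _).1 (by rw [map_sub, hπ, hy h h.2, sub_self])
  choose c hc using hker
  have hcocycle : ∀ g h : H, c (g * h) = c g + ρC g (c h) := fun g h => hs.injective <| by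
    rw [map_add, hj, hc, hc, hc, Subgroup.coe_mul, AddAut.map_mul_apply, map_sub]
    abel
  obtain ⟨m, hm⟩ := hC H c hcocycle
  refine ⟨x₀ - j m, by rw [map_sub, hs.exact.apply_apply_eq_zero, sub_zero], fun h hh => ?_⟩
  have hx₀ : ρX h x₀ = x₀ + j (ρC h m - m) := by
    rw [← hm ⟨h, hh⟩, hc, add_sub_cancel]
  rw [map_sub, hx₀, ← hj, map_sub]
  abel

theorem IsCoflasque.exists_equivariant_section (hC : IsCoflasque ρC) (hY : IsPermutationRep ρY)
    (hs : IsShortExact j π) (hj : IsEquivariant ρC ρX j) (hπ : IsEquivariant ρX ρY π) :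
    ∃ s : Y →+ X, IsEquivariant ρY ρX s ∧ ∀ y, π (s y) = y := by
  classical
  obtain ⟨ι, _, act, e, he⟩ := hY
  let b : ι → Y := fun i => e.symm (Pi.single i 1)
  have hb : ∀ g i, ρY g (b i) = b (act g i) := fun g i => e.injective <| by
    rw [he, AddEquiv.apply_symm_apply, AddEquiv.apply_symm_apply, permAut_single]
  obtain ⟨x, hxb, hx⟩ := exists_equivariant_family act ρX (fun i x => π x = b i)
    (fun g i x hxi => by rw [hπ, hxi, hb]) fun i =>
      hC.exists_fixed_lift hs hj hπ ((MulAction.stabilizer (Equiv.Perm ι) i).comap act) (b i)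
        fun h hh => by rw [hb, show act h i = i from hh]
  refine ⟨(Fintype.linearCombination ℤ x).toAddMonoidHom.comp e.toAddMonoidHom, ?_, ?_⟩
  · intro g y
    simp only [AddMonoidHom.coe_comp, comp_apply, LinearMap.toAddMonoidHom_coe,
      AddEquiv.coe_toAddMonoidHom, Fintype.linearCombination_apply, he, map_sum, map_zsmul, hx]
    rw [← Equiv.sum_comp (act g)]
    simp only [permAut_apply, Equiv.symm_apply_apply]
  · intro y
    simp only [AddMonoidHom.coe_comp, comp_apply, LinearMap.toAddMonoidHom_coe,
      AddEquiv.coe_toAddMonoidHom, Fintype.linearCombination_apply, map_sum, map_zsmul, hxb, b]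
    calc ∑ i, e y i • e.symm (Pi.single i 1) = e.symm (∑ i, e y i • Pi.single i 1) := by
          simp only [map_sum, map_zsmul]
      _ = y := by rw [← pi_eq_sum_univ', e.symm_apply_apply]

theorem IsShortExact.exists_prod_equiv_of_section (hs : IsShortExact j π)
    (hj : IsEquivariant ρC ρX j) (s : Y →+ X) (hse : IsEquivariant ρY ρX s)
    (hπs : ∀ y, π (s y) = y) : ∃ f : C × Y ≃+ X, IsEquivariant (prodAut ρC ρY) ρX f := by
  have hbij : Bijective (j.coprod s) := by
    refine ⟨(injective_iff_map_eq_zero _).2 fun ⟨c, y⟩ h0 => ?_, fun x => ?_⟩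
    · have hy : y = 0 := by
        simpa [hs.exact.apply_apply_eq_zero, hπs] using congrArg π h0
      subst hy
      rw [AddMonoidHom.coprod_apply, map_zero, add_zero] at h0
      exact Prod.ext ((injective_iff_map_eq_zero _).1 hs.injective c h0) rfl
    · obtain ⟨c, hc⟩ := (hs.exact (x - s (π x))).1 (by rw [map_sub, hπs, sub_self])
      exact ⟨(c, π x), by simp [hc]⟩
  exact ⟨AddEquiv.ofBijective _ hbij, fun g ⟨c, y⟩ => by
    show j (ρC g c) + s (ρY g y) = ρX g (j c + s y)
    rw [hj, hse, map_add]⟩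

theorem IsCoflasque.exists_prod_equiv (hC : IsCoflasque ρC) (hY : IsPermutationRep ρY)
    (hs : IsShortExact j π) (hj : IsEquivariant ρC ρX j) (hπ : IsEquivariant ρX ρY π) :
    ∃ f : C × Y ≃+ X, IsEquivariant (prodAut ρC ρY) ρX f :=
  let ⟨s, hse, hπs⟩ := hC.exists_equivariant_section hY hs hj hπ
  hs.exists_prod_equiv_of_section hj s hse hπs

end Splitting

section PermutationEquivalence

variable {M N P Q : Type*} [AddCommGroup M] [AddCommGroup N] [AddCommGroup P] [AddCommGroup Q]
  {ρM : G →* AddAut M} {ρN : G →* AddAut N} {ρP : G →* AddAut P} {ρQ : G →* AddAut Q}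

theorem IsPermutationRep.prod (hP : IsPermutationRep ρP) (hQ : IsPermutationRep ρQ) :
    IsPermutationRep (prodAut ρP ρQ) := by
  obtain ⟨ι, _, a, eP, heP⟩ := hP
  obtain ⟨κ, _, b, eQ, heQ⟩ := hQ
  refine ⟨ι ⊕ κ, inferInstance, (Equiv.Perm.sumCongrHom ι κ).comp (a.prod b),
    (eP.prodCongr eQ).trans (LinearEquiv.sumArrowLequivProdArrow ι κ ℤ ℤ).symm.toAddEquiv,
    fun g x => ?_⟩
  ext (i | k)
  · exact congrFun (heP g x.1) i
  · exact congrFun (heQ g x.2) k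

def PermutationEquivalent (ρM : G →* AddAut M) (ρN : G →* AddAut N) : Prop :=
  ∃ (ι κ : Type) (_ : Fintype ι) (_ : Fintype κ) (a : G →* Equiv.Perm ι) (b : G →* Equiv.Perm κ)
    (f : M × (ι → ℤ) ≃+ N × (κ → ℤ)),
      IsEquivariant (prodAut ρM (permAut a)) (prodAut ρN (permAut b)) f

theorem PermutationEquivalent.of_prod_addEquiv (hP : IsPermutationRep ρP)
    (hQ : IsPermutationRep ρQ) (f : M × P ≃+ N × Q)
    (hf : IsEquivariant (prodAut ρM ρP) (prodAut ρN ρQ) f) : PermutationEquivalent ρM ρN := by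
  obtain ⟨ι, _, a, eP, heP⟩ := hP
  obtain ⟨κ, _, b, eQ, heQ⟩ := hQ
  exact ⟨ι, κ, ‹_›, ‹_›, a, b,
    ((AddEquiv.refl M).prodCongr eP.symm).trans (f.trans ((AddEquiv.refl N).prodCongr eQ)),
    ((IsEquivariant.id.prodMap heQ).comp hf).comp
      (IsEquivariant.id.prodMap (IsEquivariant.symm heP))⟩

end PermutationEquivalence

section Pullback

variable {A B M : Type*} [AddCommGroup A] [AddCommGroup B] [AddCommGroup M]

def restrictAut {X : Type*} [AddCommGroup X] (ρ : G →* AddAut X) (S : AddSubgroup X)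
    (hS : ∀ g, ∀ x ∈ S, ρ g x ∈ S) : G →* AddAut S where
  toFun g :=
    { toFun x := ⟨ρ g x, hS g x x.2⟩
      invFun x := ⟨ρ g⁻¹ x, hS g⁻¹ x x.2⟩
      left_inv x := Subtype.ext <| by
        simp only [← AddAut.map_mul_apply, inv_mul_cancel, map_one, addAutGroupByComp_one_apply]
      right_inv x := Subtype.ext <| by
        simp only [← AddAut.map_mul_apply, mul_inv_cancel, map_one, addAutGroupByComp_one_apply]
      map_add' x y := Subtype.ext <| map_add (ρ g) x.1 y.1 }
  map_one' := AddEquiv.ext fun x => Subtype.ext <| by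
    simp only [map_one, addAutGroupByComp_one_apply]; rfl
  map_mul' g h := AddEquiv.ext fun x => Subtype.ext <| AddAut.map_mul_apply ρ g h x

def pullback (f : A →+ M) (g : B →+ M) : AddSubgroup (A × B) :=
  (f.comp (AddMonoidHom.fst A B)).eqLocus (g.comp (AddMonoidHom.snd A B))

theorem mem_pullback {f : A →+ M} {g : B →+ M} {x : A × B} : x ∈ pullback f g ↔ f x.1 = g x.2 :=
  Iff.rfl

def pullbackComm (f : A →+ M) (g : B →+ M) : pullback f g ≃+ pullback g f where
  toFun x := ⟨x.1.swap, (mem_pullback.1 x.2).symm⟩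
  invFun x := ⟨x.1.swap, (mem_pullback.1 x.2).symm⟩
  left_inv _ := rfl
  right_inv _ := rfl
  map_add' _ _ := rfl

def pullbackFst (f : A →+ M) (g : B →+ M) : pullback f g →+ A :=
  (AddMonoidHom.fst A B).comp (pullback f g).subtype

variable {D : Type*} [AddCommGroup D]

def pullbackInr (f : A →+ M) {g : B →+ M} {j : D →+ B} (hjg : Exact j g) : D →+ pullback f g :=
  ((AddMonoidHom.inr A B).comp j).codRestrict (pullback f g) fun d => by
    rw [mem_pullback]
    simp [hjg.apply_apply_eq_zero]

theorem isShortExact_pullbackInr (f : A →+ M) {g : B →+ M} {j : D →+ B} (hs : IsShortExact j g) :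
    IsShortExact (pullbackInr f hs.exact) (pullbackFst f g) where
  injective d d' h := hs.injective (congrArg (fun x : pullback f g => x.1.2) h)
  exact x := by
    refine ⟨fun h0 => ?_, by rintro ⟨d, rfl⟩; rfl⟩
    have h0 : x.1.1 = 0 := h0
    obtain ⟨d, hd⟩ := (hs.exact x.1.2).1 (by rw [← mem_pullback.1 x.2, h0, map_zero])
    exact ⟨d, Subtype.ext (Prod.ext h0.symm hd)⟩
  surjective a := by
    obtain ⟨b, hb⟩ := hs.surjective (f a)
    exact ⟨⟨(a, b), hb.symm⟩, rfl⟩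

variable {ρA : G →* AddAut A} {ρB : G →* AddAut B} {ρM : G →* AddAut M}

def pullbackAut (f : A →+ M) (g : B →+ M) (hf : IsEquivariant ρA ρM f)
    (hg : IsEquivariant ρB ρM g) : G →* AddAut (pullback f g) :=
  restrictAut (prodAut ρA ρB) (pullback f g) fun γ x hx => by
    rw [mem_pullback] at hx ⊢
    exact (hf γ x.1).trans ((congrArg _ hx).trans (hg γ x.2).symm)

variable {f : A →+ M} {g : B →+ M} (hf : IsEquivariant ρA ρM f) (hg : IsEquivariant ρB ρM g)

theorem isEquivariant_pullbackFst : IsEquivariant (pullbackAut f g hf hg) ρA (pullbackFst f g) :=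
  fun _ _ => rfl

theorem isEquivariant_pullbackInr {ρD : G →* AddAut D} {j : D →+ B} (hjg : Exact j g)
    (hj : IsEquivariant ρD ρB j) : IsEquivariant ρD (pullbackAut f g hf hg) (pullbackInr f hjg) :=
  fun γ d => Subtype.ext (Prod.ext (map_zero (ρA γ)).symm (hj γ d))

theorem isEquivariant_pullbackComm :
    IsEquivariant (pullbackAut f g hf hg) (pullbackAut g f hg hf) (pullbackComm f g) :=
  fun _ _ => rfl

end Pullback

theorem permutationEquivalent_of_isShortExact {C D P Q M : Type*} [AddCommGroup C]
    [AddCommGroup D] [AddCommGroup P] [AddCommGroup Q] [AddCommGroup M]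
    {ρC : G →* AddAut C} {ρD : G →* AddAut D} {ρP : G →* AddAut P} {ρQ : G →* AddAut Q}
    {ρM : G →* AddAut M} (hC : IsCoflasque ρC) (hD : IsCoflasque ρD)
    (hP : IsPermutationRep ρP) (hQ : IsPermutationRep ρQ)
    {j : C →+ P} {π : P →+ M} {j' : D →+ Q} {π' : Q →+ M}
    (hs : IsShortExact j π) (hs' : IsShortExact j' π')
    (hj : IsEquivariant ρC ρP j) (hπ : IsEquivariant ρP ρM π)
    (hj' : IsEquivariant ρD ρQ j') (hπ' : IsEquivariant ρQ ρM π') :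
    PermutationEquivalent ρC ρD := by
  obtain ⟨e, he⟩ := hC.exists_prod_equiv hQ (isShortExact_pullbackInr π' hs)
    (isEquivariant_pullbackInr hπ' hπ hs.exact hj) (isEquivariant_pullbackFst hπ' hπ)
  obtain ⟨e', he'⟩ := hD.exists_prod_equiv hP (isShortExact_pullbackInr π hs')
    (isEquivariant_pullbackInr hπ hπ' hs'.exact hj') (isEquivariant_pullbackFst hπ hπ')
  exact .of_prod_addEquiv hQ hP (e.trans ((pullbackComm π' π).trans e'.symm))
    (he'.symm.comp ((isEquivariant_pullbackComm hπ' hπ).comp he))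

end

theorem coflasque_class_well_defined_general {G : Type*} [Group G]
    {M₁ M₂ C₁ C₂ P₁ P₂ Q₁ Q₂ : Type*}
    [AddCommGroup M₁] [AddCommGroup M₂] [AddCommGroup C₁] [AddCommGroup C₂]
    [AddCommGroup P₁] [AddCommGroup P₂] [AddCommGroup Q₁] [AddCommGroup Q₂]
    (ρM₁ : G →* AddAut M₁) (ρM₂ : G →* AddAut M₂)
    (ρC₁ : G →* AddAut C₁) (ρC₂ : G →* AddAut C₂)
    (ρP₁ : G →* AddAut P₁) (ρP₂ : G →* AddAut P₂)
    (ρQ₁ : G →* AddAut Q₁) (ρQ₂ : G →* AddAut Q₂)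
    (hP₁ : IsPermutationRep ρP₁) (hP₂ : IsPermutationRep ρP₂)
    (hQ₁ : IsPermutationRep ρQ₁) (hQ₂ : IsPermutationRep ρQ₂)
    (hC₁ : IsCoflasque ρC₁) (hC₂ : IsCoflasque ρC₂)
    (j₁ : C₁ →+ P₁) (π₁ : P₁ →+ M₁) (j₂ : C₂ →+ P₂) (π₂ : P₂ →+ M₂)
    (hj₁ : ∀ g x, j₁ (ρC₁ g x) = ρP₁ g (j₁ x)) (hπ₁ : ∀ g x, π₁ (ρP₁ g x) = ρM₁ g (π₁ x))
    (hj₂ : ∀ g x, j₂ (ρC₂ g x) = ρP₂ g (j₂ x)) (hπ₂ : ∀ g x, π₂ (ρP₂ g x) = ρM₂ g (π₂ x))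
    (hinj₁ : Function.Injective j₁) (hsurj₁ : Function.Surjective π₁)
    (hexact₁ : ∀ x : P₁, π₁ x = 0 ↔ x ∈ Set.range j₁)
    (hinj₂ : Function.Injective j₂) (hsurj₂ : Function.Surjective π₂)
    (hexact₂ : ∀ x : P₂, π₂ x = 0 ↔ x ∈ Set.range j₂)
    (e : M₁ × Q₁ ≃+ M₂ × Q₂)
    (he : ∀ (g : G) (x : M₁ × Q₁), e (prodAut ρM₁ ρQ₁ g x) = prodAut ρM₂ ρQ₂ g (e x)) :
    ∃ (ι₁ ι₂ : Type) (_ : Fintype ι₁) (_ : Fintype ι₂)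
      (a₁ : G →* Equiv.Perm ι₁) (a₂ : G →* Equiv.Perm ι₂)
      (f : C₁ × (ι₁ → ℤ) ≃+ C₂ × (ι₂ → ℤ)),
        ∀ (g : G) (x : C₁ × (ι₁ → ℤ)),
          f (prodAut ρC₁ (permAut a₁) g x) = prodAut ρC₂ (permAut a₂) g (f x) := by
  have hs₁ := (IsShortExact.mk hinj₁ hexact₁ hsurj₁).prodMap_id Q₁ |>.addEquiv_comp e
  have hs₂ := (IsShortExact.mk hinj₂ hexact₂ hsurj₂).prodMap_id Q₂
  exact permutationEquivalent_of_isShortExact hC₁ hC₂ (hP₁.prod hQ₁) (hP₂.prod hQ₂) hs₁ hs₂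
    (isEquivariant_inl.comp hj₁) (IsEquivariant.comp (f' := e) he (IsEquivariant.prodMap hπ₁ .id))
    (isEquivariant_inl.comp hj₂) (IsEquivariant.prodMap hπ₂ .id)

/-- Schanuel-type uniqueness of the coflasque class: if `0 → Cᵢ → Pᵢ → Mᵢ → 0` are
coflasque resolutions (`Pᵢ` permutation, `Cᵢ` coflasque) and `M₁`, `M₂` are permutation
equivalent, then `C₁` and `C₂` are permutation equivalent. -/
theorem coflasque_class_well_defined {G : Type*} [Group G] [Fintype G]
    {M₁ M₂ C₁ C₂ P₁ P₂ Q₁ Q₂ : Type*}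
    [AddCommGroup M₁] [AddCommGroup M₂] [AddCommGroup C₁] [AddCommGroup C₂]
    [AddCommGroup P₁] [AddCommGroup P₂] [AddCommGroup Q₁] [AddCommGroup Q₂]
    [Module.Free ℤ M₁] [Module.Finite ℤ M₁] [Module.Free ℤ M₂] [Module.Finite ℤ M₂]
    [Module.Free ℤ C₁] [Module.Finite ℤ C₁] [Module.Free ℤ C₂] [Module.Finite ℤ C₂]
    [Module.Free ℤ P₁] [Module.Finite ℤ P₁] [Module.Free ℤ P₂] [Module.Finite ℤ P₂]
    [Module.Free ℤ Q₁] [Module.Finite ℤ Q₁] [Module.Free ℤ Q₂] [Module.Finite ℤ Q₂]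
    (ρM₁ : G →* AddAut M₁) (ρM₂ : G →* AddAut M₂)
    (ρC₁ : G →* AddAut C₁) (ρC₂ : G →* AddAut C₂)
    (ρP₁ : G →* AddAut P₁) (ρP₂ : G →* AddAut P₂)
    (ρQ₁ : G →* AddAut Q₁) (ρQ₂ : G →* AddAut Q₂)
    (hP₁ : IsPermutationRep ρP₁) (hP₂ : IsPermutationRep ρP₂)
    (hQ₁ : IsPermutationRep ρQ₁) (hQ₂ : IsPermutationRep ρQ₂)
    (hC₁ : IsCoflasque ρC₁) (hC₂ : IsCoflasque ρC₂)
    (j₁ : C₁ →+ P₁) (π₁ : P₁ →+ M₁) (j₂ : C₂ →+ P₂) (π₂ : P₂ →+ M₂)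
    (hj₁ : ∀ g x, j₁ (ρC₁ g x) = ρP₁ g (j₁ x)) (hπ₁ : ∀ g x, π₁ (ρP₁ g x) = ρM₁ g (π₁ x))
    (hj₂ : ∀ g x, j₂ (ρC₂ g x) = ρP₂ g (j₂ x)) (hπ₂ : ∀ g x, π₂ (ρP₂ g x) = ρM₂ g (π₂ x))
    (hinj₁ : Function.Injective j₁) (hsurj₁ : Function.Surjective π₁)
    (hexact₁ : ∀ x : P₁, π₁ x = 0 ↔ x ∈ Set.range j₁)
    (hinj₂ : Function.Injective j₂) (hsurj₂ : Function.Surjective π₂)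
    (hexact₂ : ∀ x : P₂, π₂ x = 0 ↔ x ∈ Set.range j₂)
    (e : M₁ × Q₁ ≃+ M₂ × Q₂)
    (he : ∀ (g : G) (x : M₁ × Q₁), e (prodAut ρM₁ ρQ₁ g x) = prodAut ρM₂ ρQ₂ g (e x)) :
    ∃ (ι₁ ι₂ : Type) (_ : Fintype ι₁) (_ : Fintype ι₂)
      (a₁ : G →* Equiv.Perm ι₁) (a₂ : G →* Equiv.Perm ι₂)
      (f : C₁ × (ι₁ → ℤ) ≃+ C₂ × (ι₂ → ℤ)),
        ∀ (g : G) (x : C₁ × (ι₁ → ℤ)),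
          f (prodAut ρC₁ (permAut a₁) g x) = prodAut ρC₂ (permAut a₂) g (f x) :=
  coflasque_class_well_defined_general ρM₁ ρM₂ ρC₁ ρC₂ ρP₁ ρP₂ ρQ₁ ρQ₂ hP₁ hP₂ hQ₁ hQ₂ hC₁ hC₂ j₁ π₁
    j₂ π₂ hj₁ hπ₁ hj₂ hπ₂ hinj₁ hsurj₁ hexact₁ hinj₂ hsurj₂ hexact₂ e he
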